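/- arXiv:2009.12978 — 5 statements merged into one kernel-verified Lean document; each statement's English description precedes it below -/
import Mathlib

section
/- Let Σ be a set, K, N positive integers, f_k : Σ → ℝ functions and M_k ∈ ℝ^{N×N} matrices for k = 1,…,K, and suppose Ψ : Σ → ℝ^{N×N} satisfies Ψ(x) = Σ_{k=1}^K f_k(x)·M_k for all x ∈ Σ. Then for any vector v ∈ ℝ^N: if v (M_{k₁}·M_{k₂}·…·M_{kₙ}) 𝟙 = 0 for every n ≥ 0 and every finite sequence k₁,…,kₙ ∈ {1,…,K}, then v Ψ(w) 𝟙 = 0 for every word w ∈ Σ*. -/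
open Matrix

private lemma aux_sum_mulVec {N K : ℕ} (A : Fin K → Matrix (Fin N) (Fin N) ℝ)
    (u : Fin N → ℝ) : (∑ k, A k) *ᵥ u = ∑ k, A k *ᵥ u :=
  map_sum (AddMonoidHom.mk' (fun B : Matrix (Fin N) (Fin N) ℝ => B *ᵥ u)
    fun B C => Matrix.add_mulVec B C u) A Finset.univ

private lemma aux_dot_sum {N K : ℕ} (v : Fin N → ℝ) (g : Fin K → Fin N → ℝ) :
    v ⬝ᵥ (∑ k, g k) = ∑ k, v ⬝ᵥ g k :=
  map_sum (AddMonoidHom.mk' (fun u : Fin N → ℝ => v ⬝ᵥ u)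
    fun a b => dotProduct_add v a b) g Finset.univ

theorem stmt6 {α : Type*} {K N : ℕ} (hK : 0 < K) (hN : 0 < N)
    (f : Fin K → α → ℝ) (M : Fin K → Matrix (Fin N) (Fin N) ℝ)
    (Ψ : α → Matrix (Fin N) (Fin N) ℝ)
    (hΨ : ∀ x, Ψ x = ∑ k, f k x • M k)
    (v : Fin N → ℝ)
    (h : ∀ ks : List (Fin K), v ⬝ᵥ ((ks.map M).prod *ᵥ 1) = 0) :
    ∀ w : List α, v ⬝ᵥ ((w.map Ψ).prod *ᵥ 1) = 0 := by
  suffices H : ∀ (w : List α) (v : Fin N → ℝ),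
      (∀ ks : List (Fin K), v ⬝ᵥ ((ks.map M).prod *ᵥ 1) = 0) →
      v ⬝ᵥ ((w.map Ψ).prod *ᵥ 1) = 0 from fun w => H w v h
  intro w
  induction w with
  | nil => intro v hv; simpa using hv []
  | cons x w ih =>
    intro v hv
    have key : ∀ ks : List (Fin K), (v ᵥ* Ψ x) ⬝ᵥ ((ks.map M).prod *ᵥ 1) = 0 := by
      intro ks
      rw [← Matrix.dotProduct_mulVec, hΨ, aux_sum_mulVec, aux_dot_sum]
      refine Finset.sum_eq_zero fun k _ => ?_
      rw [Matrix.smul_mulVec, dotProduct_smul]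
      have := hv (k :: ks)
      simp only [List.map_cons, List.prod_cons, ← Matrix.mulVec_mulVec] at this
      rw [this, smul_zero]
    have := ih (v ᵥ* Ψ x) key
    rw [List.map_cons, List.prod_cons, ← Matrix.mulVec_mulVec,
      Matrix.dotProduct_mulVec]
    exact this
end

section
/- Let H be a finite set of pairwise disjoint half-open intervals [a,b) ⊂ ℝ. Let m₁, …, m_I be pairwise distinct interval-domain monomials, m_i(x) = x^{k_i}·χ_{I_i}(x), with each I_i ∈ H. Let g₁, …, g_J be Gaussian densities with pairwise distinct parameter pairs (μ_j, σ_j), and let e₁, …, e_K be exponential densities with pairwise distinct rates λ_k > 0. If real coefficients r₁,…,r_I, s₁,…,s_J, t₁,…,t_K satisfy Σ_{i=1}^I r_i m_i(x) + Σ_{j=1}^J s_j g_j(x) + Σ_{k=1}^K t_k e_k(x) = 0 for Lebesgue-almost every x ∈ ℝ, then all coefficients r_i, s_j, t_k are zero; i.e., the family {m_1, …, m_I, g_1, …, g_J, e_1, …, e_K} is linearly independent in L¹(ℝ). -/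
open MeasureTheory

/-- The Gaussian density with mean `μ` and standard deviation `σ`. -/
noncomputable def gaussDensity (μ σ : ℝ) (x : ℝ) : ℝ :=
  (1 / (σ * Real.sqrt (2 * Real.pi))) * Real.exp (-((x - μ) ^ 2) / (2 * σ ^ 2))

/-- The exponential density with rate `l`. -/
noncomputable def expDensity (l : ℝ) (x : ℝ) : ℝ :=
  if 0 ≤ x then l * Real.exp (-(l * x)) else 0

/-- The interval-domain monomial `x ↦ x ^ k · χ_{[a,b)}(x)`. -/
noncomputable def intervalMonomial (k : ℕ) (a b : ℝ) (x : ℝ) : ℝ :=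
  if x ∈ Set.Ico a b then x ^ k else 0

/-! Along `x → +∞` the monomials vanish, while the exponential and Gaussian densities are
totally ordered by growth: `λ e^{-λx}` decays more slowly for smaller `λ`, every Gaussian is `o` of
every exponential, and among Gaussians a larger `σ`, then a larger `μ`, decays more slowly.
A combination of such a family that vanishes eventually has zero coefficients, since its
slowest-decaying term with nonzero coefficient would otherwise be `o` of itself.
What remains is a combination of monomials vanishing almost everywhere; on each interval of `H`
it is a polynomial vanishing on a set of positive measure, hence zero, and the monomials living on
one interval have distinct degrees. -/

open Filter Asymptotics Real Polynomial

theorem eq_zero_of_eventually_sum_eq_zero_of_isLittleO {ι α β : Type*} [LinearOrder β]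
    {l : Filter α} {f : ι → α → ℝ} (key : ι → β) (hkey : Function.Injective key)
    (hf : ∀ i, ∃ᶠ x in l, f i x ≠ 0) (ho : ∀ i j, key i < key j → f i =o[l] f j)
    {s : Finset ι} {c : ι → ℝ} (h : ∀ᶠ x in l, ∑ i ∈ s, c i * f i x = 0) :
    ∀ i ∈ s, c i = 0 := by
  classical
  by_contra! hne
  obtain ⟨i₀, hi₀, hmax⟩ := (s.filter (c · ≠ 0)).exists_max_image key
    (by simpa [Finset.filter_nonempty_iff] using hne)
  rw [Finset.mem_filter] at hi₀
  have hrest : (fun x => ∑ i ∈ s.erase i₀, c i * f i x) =o[l] f i₀ := by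
    refine IsLittleO.fun_sum fun i hi => ?_
    by_cases hci : c i = 0
    · simp [hci]
    · have hlt : key i < key i₀ := (hmax i (Finset.mem_filter.2
        ⟨Finset.mem_of_mem_erase hi, hci⟩)).lt_of_ne (hkey.ne (Finset.ne_of_mem_erase hi))
      exact (ho i i₀ hlt).const_mul_left (c i)
  have hsum : (fun x => ∑ i ∈ s, c i * f i x) =o[l] f i₀ :=
    (isLittleO_zero (f i₀) l).congr' (h.mono fun x hx => hx.symm) EventuallyEq.rfl
  have hlead : (fun x => c i₀ * f i₀ x) =o[l] f i₀ :=
    (hsum.sub hrest).congr (fun x => by simp [← Finset.add_sum_erase s _ hi₀.1]) fun _ => rfl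
  exact isLittleO_irrefl (hf i₀) ((isLittleO_const_mul_left_iff hi₀.2).1 hlead)

theorem tendsto_quadratic_atTop {A B : ℝ} (C : ℝ) (h : 0 < A ∨ (A = 0 ∧ 0 < B)) :
    Tendsto (fun x : ℝ => A * x ^ 2 + B * x + C) atTop atTop := by
  rcases h with hA | ⟨rfl, hB⟩
  · have : Tendsto (fun x : ℝ => x * (A * x + B)) atTop atTop :=
      tendsto_id.atTop_mul_atTop₀ (tendsto_atTop_add_const_right _ B (tendsto_id.const_mul_atTop hA))
    exact tendsto_atTop_add_const_right _ C (this.congr fun x => by ring)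
  · simpa using tendsto_atTop_add_const_right _ C (tendsto_id.const_mul_atTop hB)

theorem isLittleO_const_mul_exp {α : Type*} {l : Filter α} {u v : α → ℝ} (c₁ : ℝ) {c₂ : ℝ}
    (hc₂ : c₂ ≠ 0) (h : Tendsto (fun x => v x - u x) l atTop) :
    (fun x => c₁ * exp (u x)) =o[l] fun x => c₂ * exp (v x) :=
  ((isLittleO_exp_comp_exp_comp.2 h).const_mul_left c₁).const_mul_right hc₂

theorem isLittleO_mul_exp_neg_mul {l₁ l₂ : ℝ} (hl₂ : l₂ ≠ 0) (h : l₂ < l₁) :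
    (fun x => l₁ * exp (-(l₁ * x))) =o[atTop] fun x => l₂ * exp (-(l₂ * x)) :=
  isLittleO_const_mul_exp _ hl₂
    ((tendsto_id.const_mul_atTop (sub_pos.2 h)).congr fun x => by simp only [id]; ring)

theorem gaussDensity_pos (μ : ℝ) {σ : ℝ} (hσ : 0 < σ) (x : ℝ) : 0 < gaussDensity μ σ x := by
  unfold gaussDensity; positivity

theorem gaussDensity_isLittleO_mul_exp_neg_mul (μ : ℝ) {σ l : ℝ} (hσ : σ ≠ 0) (hl : l ≠ 0) :
    gaussDensity μ σ =o[atTop] fun x => l * exp (-(l * x)) :=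
  isLittleO_const_mul_exp _ hl <|
    (tendsto_quadratic_atTop (A := 1 / (2 * σ ^ 2)) (B := -(μ / σ ^ 2) - l) (μ ^ 2 / (2 * σ ^ 2))
      (Or.inl (by positivity))).congr fun x => by ring

theorem gaussDensity_isLittleO_gaussDensity {μ₁ σ₁ μ₂ σ₂ : ℝ} (hσ₁ : 0 < σ₁) (hσ₂ : 0 < σ₂)
    (h : σ₁ < σ₂ ∨ (σ₁ = σ₂ ∧ μ₁ < μ₂)) :
    gaussDensity μ₁ σ₁ =o[atTop] gaussDensity μ₂ σ₂ := by
  refine isLittleO_const_mul_exp _ (by positivity) <|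
    (tendsto_quadratic_atTop (A := 1 / (2 * σ₁ ^ 2) - 1 / (2 * σ₂ ^ 2))
      (B := μ₂ / σ₂ ^ 2 - μ₁ / σ₁ ^ 2) (μ₁ ^ 2 / (2 * σ₁ ^ 2) - μ₂ ^ 2 / (2 * σ₂ ^ 2)) ?_).congr
      fun x => by ring
  rcases h with hlt | ⟨rfl, hμ⟩
  · left
    have : 1 / (2 * σ₂ ^ 2) < 1 / (2 * σ₁ ^ 2) := by gcongr
    linarith
  · right
    refine ⟨sub_self _, sub_pos.2 ?_⟩
    gcongr

theorem eq_zero_of_eventually_sum_gaussDensity_add_sum_exp_eq_zero {J K : ℕ}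
    {μ σ : Fin J → ℝ} (hσ : ∀ j, 0 < σ j) (hgdist : Function.Injective fun j => (μ j, σ j))
    {lam : Fin K → ℝ} (hlam : ∀ k, lam k ≠ 0) (hedist : Function.Injective lam)
    {s : Fin J → ℝ} {t : Fin K → ℝ} {l : Filter ℝ} [l.NeBot] (hl : l ≤ atTop)
    (h : ∀ᶠ x in l, ∑ j, s j * gaussDensity (μ j) (σ j) x
      + ∑ k, t k * (lam k * exp (-(lam k * x))) = 0) :
    (∀ j, s j = 0) ∧ (∀ k, t k = 0) := by
  let f : Fin J ⊕ Fin K → ℝ → ℝ :=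
    Sum.elim (fun j => gaussDensity (μ j) (σ j)) fun k x => lam k * exp (-(lam k * x))
  -- orders the family by growth at `+∞`
  let key : Fin J ⊕ Fin K → Lex (ℝ × ℝ) ⊕ₗ ℝ :=
    fun i => toLex (Sum.map (fun j => toLex (σ j, μ j)) (fun k => -lam k) i)
  have hkey : Function.Injective key := by
    refine toLex.injective.comp (Function.Injective.sumMap (fun j j' hjj' => hgdist ?_)
      (neg_injective.comp hedist))
    simp_all [Prod.ext_iff]
  have hf : ∀ i, ∃ᶠ x in l, f i x ≠ 0 := by
    rintro (j | k) <;> refine Frequently.of_forall fun x => ?_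
    · exact (gaussDensity_pos _ (hσ j) x).ne'
    · exact mul_ne_zero (hlam k) (exp_ne_zero _)
  have ho : ∀ i i', key i < key i' → f i =o[l] f i' := by
    rintro (j | k) (j' | k') hlt <;> refine IsLittleO.mono ?_ hl
    · exact gaussDensity_isLittleO_gaussDensity (hσ j) (hσ j')
        (Prod.Lex.toLex_lt_toLex.1 (Sum.Lex.inl_lt_inl_iff.1 hlt))
    · exact gaussDensity_isLittleO_mul_exp_neg_mul _ (hσ j).ne' (hlam k')
    · exact absurd hlt Sum.Lex.not_inr_lt_inl
    · exact isLittleO_mul_exp_neg_mul (hlam k') (neg_lt_neg_iff.1 (Sum.Lex.inr_lt_inr_iff.1 hlt))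
  have hc := eq_zero_of_eventually_sum_eq_zero_of_isLittleO key hkey hf ho
    (s := Finset.univ) (c := Sum.elim s t) (by simpa [f, Fintype.sum_sum_type] using h)
  exact ⟨fun j => hc (.inl j) (Finset.mem_univ _), fun k => hc (.inr k) (Finset.mem_univ _)⟩

theorem Polynomial.eq_zero_of_ae_isRoot {R : Type*} [CommRing R] [IsDomain R]
    [MeasurableSpace R] {μ : Measure R} [NullSingletonClass μ] (hμ : μ ≠ 0) {p : R[X]}
    (h : ∀ᵐ x ∂μ, p.IsRoot x) : p = 0 := by
  by_contra hp
  have hnot : ∀ᵐ x ∂μ, ¬p.IsRoot x := by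
    simpa [ae_iff] using (finite_setOfPred_isRoot hp).measure_zero μ
  have := ae_neBot.2 hμ
  obtain ⟨x, hx, hnx⟩ := (h.and hnot).exists
  exact hnx hx

theorem Polynomial.coeff_sum_C_mul_X_pow {ι R : Type*} [Semiring R] {s : Finset ι} {n : ι → ℕ}
    (hn : Set.InjOn n s) (c : ι → R) {i : ι} (hi : i ∈ s) :
    (∑ j ∈ s, C (c j) * X ^ n j).coeff (n i) = c i := by
  rw [finsetSum_coeff, Finset.sum_eq_single_of_mem i hi]
  · simp
  · intro j hj hji
    rw [coeff_C_mul_X_pow, if_neg fun h => hji (hn hj hi h.symm)]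

theorem intervalMonomial_of_mem {k : ℕ} {a b x : ℝ} (hx : x ∈ Set.Ico a b) :
    intervalMonomial k a b x = x ^ k :=
  if_pos hx

theorem intervalMonomial_of_notMem {k : ℕ} {a b x : ℝ} (hx : x ∉ Set.Ico a b) :
    intervalMonomial k a b x = 0 :=
  if_neg hx

theorem eq_zero_of_ae_sum_intervalMonomial_eq_zero {ι : Type*} [Fintype ι]
    {k : ι → ℕ} {a b : ι → ℝ} (hab : ∀ i, a i < b i)
    (hH : ∀ i i', Set.Ico (a i) (b i) = Set.Ico (a i') (b i') ∨
      Disjoint (Set.Ico (a i) (b i)) (Set.Ico (a i') (b i')))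
    (hmdist : Function.Injective fun i => (k i, a i, b i)) {r : ι → ℝ}
    (h : ∀ᵐ x, ∑ i, r i * intervalMonomial (k i) (a i) (b i) x = 0) (i₀ : ι) : r i₀ = 0 := by
  classical
  set T := Finset.univ.filter fun i => Set.Ico (a i) (b i) = Set.Ico (a i₀) (b i₀)
  have hT : ∀ {i}, i ∈ T ↔ Set.Ico (a i) (b i) = Set.Ico (a i₀) (b i₀) := by simp [T]
  have hblock : ∀ x ∈ Set.Ico (a i₀) (b i₀), ∑ i, r i * intervalMonomial (k i) (a i) (b i) x
      = (∑ i ∈ T, C (r i) * X ^ k i).eval x := by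
    intro x hx
    rw [eval_finsetSum, ← Finset.sum_subset (Finset.subset_univ T)]
    · refine Finset.sum_congr rfl fun i hi => ?_
      rw [intervalMonomial_of_mem (hT.1 hi ▸ hx)]
      simp
    · intro i _ hi
      have hdisj := (hH i i₀).resolve_left (mt hT.2 hi)
      rw [intervalMonomial_of_notMem (Set.disjoint_right.1 hdisj hx), mul_zero]
  have hp : ∑ i ∈ T, C (r i) * X ^ k i = 0 := by
    refine eq_zero_of_ae_isRoot (μ := volume.restrict (Set.Ico (a i₀) (b i₀))) ?_ ?_
    · simpa [Measure.restrict_eq_zero] using hab i₀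
    · filter_upwards [ae_restrict_of_ae h, ae_restrict_mem measurableSet_Ico] with x hx hxI
      rwa [IsRoot, ← hblock x hxI]
  have hinj : Set.InjOn k T := by
    intro i hi i' hi' hk
    obtain ⟨ha, hb⟩ := (Set.Ico_eq_Ico_iff (.inl (hab i))).1 ((hT.1 hi).trans (hT.1 hi').symm)
    exact hmdist (by simp [hk, ha, hb])
  simpa [hp] using (coeff_sum_C_mul_X_pow hinj r (hT.2 rfl)).symm

theorem neBot_atTop_inf_ae_volume : (atTop ⊓ ae (volume : Measure ℝ)).NeBot := by
  refine inf_neBot_iff_frequently_left.2 fun {p} hp => ?_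
  obtain ⟨x₀, hx₀⟩ := eventually_atTop.1 hp
  refine frequently_ae_iff.2 (ne_bot_of_le_ne_bot ?_ (measure_mono (s := Set.Ici x₀) hx₀))
  simp

theorem expDensity_of_nonneg (l : ℝ) {x : ℝ} (hx : 0 ≤ x) :
    expDensity l x = l * exp (-(l * x)) :=
  if_pos hx

theorem stmt8 {I J K : ℕ}
    (k : Fin I → ℕ) (a b : Fin I → ℝ)
    (hab : ∀ i, a i < b i)
    -- the supports come from a family `H` of pairwise disjoint half-open intervals:
    (hH : ∀ i i', Set.Ico (a i) (b i) = Set.Ico (a i') (b i') ∨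
          Disjoint (Set.Ico (a i) (b i)) (Set.Ico (a i') (b i')))
    -- the interval-domain monomials are pairwise distinct:
    (hmdist : Function.Injective (fun i => (k i, a i, b i)))
    (μ σ : Fin J → ℝ) (hσ : ∀ j, 0 < σ j)
    -- the Gaussian densities have pairwise distinct parameter pairs:
    (hgdist : Function.Injective (fun j => (μ j, σ j)))
    (lam : Fin K → ℝ) (hlam : ∀ l, 0 < lam l)
    -- the exponential densities have pairwise distinct rates:
    (hedist : Function.Injective lam)
    (r : Fin I → ℝ) (s : Fin J → ℝ) (t : Fin K → ℝ)
    (h : ∀ᵐ x ∂(volume : Measure ℝ),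
        ∑ i, r i * intervalMonomial (k i) (a i) (b i) x
          + ∑ j, s j * gaussDensity (μ j) (σ j) x
          + ∑ l, t l * expDensity (lam l) x = 0) :
    (∀ i, r i = 0) ∧ (∀ j, s j = 0) ∧ (∀ l, t l = 0) := by
  have := neBot_atTop_inf_ae_volume
  have htail : ∀ᶠ x in atTop ⊓ ae volume, ∑ j, s j * gaussDensity (μ j) (σ j) x
      + ∑ l, t l * (lam l * exp (-(lam l * x))) = 0 := by
    filter_upwards [h.filter_mono inf_le_right,
      (eventually_all.2 fun i => eventually_ge_atTop (b i)).filter_mono inf_le_left,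
      (eventually_ge_atTop 0).filter_mono inf_le_left] with x hx hxb hx0
    have hmon : ∀ i, intervalMonomial (k i) (a i) (b i) x = 0 :=
      fun i => intervalMonomial_of_notMem fun hxi => (hxi.2.trans_le (hxb i)).false
    simpa [hmon, expDensity_of_nonneg _ hx0] using hx
  obtain ⟨hs, ht⟩ := eq_zero_of_eventually_sum_gaussDensity_add_sum_exp_eq_zero hσ hgdist
    (fun l => (hlam l).ne') hedist inf_le_left htail
  refine ⟨eq_zero_of_ae_sum_intervalMonomial_eq_zero hab hH hmdist ?_, hs, ht⟩
  filter_upwards [h] with x hx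
  simpa [hs, ht] using hx
end

section
/- Let Σ be a set, d, N positive integers, f₁, …, f_d : Σ → ℝ linearly independent functions (in the vector space of all functions Σ → ℝ), P₁, …, P_d ∈ ℝ^{N×N}, and Ψ(x) = Σ_{k=1}^d f_k(x)·P_k for all x ∈ Σ. Then span{Ψ(w) : w ∈ Σ*} = span{P_{k₁}·P_{k₂}·…·P_{kₙ} : n ≥ 0, k₁,…,kₙ ∈ {1,…,d}}, spans taken in the real vector space of N×N matrices. Consequently, for any π₁, π₂ ∈ ℝ^N: π₁ Ψ(w) 𝟙 = π₂ Ψ(w) 𝟙 for all w ∈ Σ* if and only if π₁ (P_{k₁}·…·P_{kₙ}) 𝟙 = π₂ (P_{k₁}·…·P_{kₙ}) 𝟙 for all finite sequences k₁, …, kₙ ∈ {1,…,d}. -/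
/-!
Linear independence of `f₁, …, f_d` means that no nonzero linear form on `ℝ^d` vanishes on all
evaluation vectors `(f_k x)_k`, so these vectors span `ℝ^d` and every `P_k` is a linear combination
of the matrices `Ψ x`. Hence `{Ψ x}` and `{P_k}` generate the same subalgebra of matrices, and the
span of all products of generators is exactly that subalgebra. The second claim follows because
two linear forms agreeing on a set agree on its span.
-/

open Matrix

open Set Submodule in
theorem span_range_eval_eq_top_of_linearIndependent {ι α K : Type*} [Fintype ι] [Field K]
    {f : ι → α → K} (hf : LinearIndependent K f) :
    span K (range fun x k => f k x) = ⊤ := by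
  classical
  by_contra hne
  obtain ⟨φ, hφ, hle⟩ := exists_le_ker_of_lt_top _ (lt_top_iff_ne_top.mpr hne)
  let e : ι → K := fun k => φ fun j => if k = j then 1 else 0
  have he : ∑ k, e k • f k = 0 := funext fun x => by
    have hx : φ (fun k => f k x) = 0 := hle (subset_span ⟨x, rfl⟩)
    rw [LinearMap.pi_apply_eq_sum_univ φ] at hx
    simpa [mul_comm] using hx
  have he0 : ∀ k, e k = 0 := Fintype.linearIndependent_iff.mp hf e he
  refine hφ (LinearMap.ext fun v => ?_)
  rw [LinearMap.pi_apply_eq_sum_univ φ v, LinearMap.zero_apply]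
  change ∑ k, v k • e k = 0
  simp [he0]

open Set Submodule in
theorem mem_span_range_of_linearIndependent {ι α K A : Type*} [Fintype ι] [Field K]
    [AddCommGroup A] [Module K A] {f : ι → α → K} (hf : LinearIndependent K f)
    (P : ι → A) (Ψ : α → A) (hΨ : ∀ x, Ψ x = ∑ k, f k x • P k) (k : ι) :
    P k ∈ span K (range Ψ) := by
  classical
  have hrange : range Ψ = Fintype.linearCombination K P '' range fun x k => f k x := by
    rw [← range_comp]
    exact congrArg range (funext fun x => by simp [hΨ, Fintype.linearCombination_apply])
  rw [hrange, ← map_span, span_range_eval_eq_top_of_linearIndependent hf]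
  exact ⟨Pi.single k 1, trivial, by simp [Fintype.linearCombination_apply, Pi.single_apply]⟩

theorem span_setOf_list_prod_eq_adjoin {ι R A : Type*} [CommSemiring R] [Semiring A]
    [Algebra R A] (g : ι → A) :
    Submodule.span R {a | ∃ w : List ι, a = (w.map g).prod} =
      Subalgebra.toSubmodule (Algebra.adjoin R (Set.range g)) := by
  rw [Algebra.adjoin_eq_span, ← FreeMonoid.mrange_lift]
  congr 1
  ext a
  simp only [Set.mem_ofPred_eq, SetLike.mem_coe, MonoidHom.mem_mrange, FreeMonoid.lift_apply]
  exact ⟨fun ⟨w, hw⟩ => ⟨FreeMonoid.ofList w, hw.symm⟩, fun ⟨w, hw⟩ => ⟨w.toList, hw.symm⟩⟩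

theorem adjoin_range_eq_of_linearIndependent {ι α K A : Type*} [Fintype ι] [Field K]
    [Ring A] [Algebra K A] {f : ι → α → K} (hf : LinearIndependent K f)
    (P : ι → A) (Ψ : α → A) (hΨ : ∀ x, Ψ x = ∑ k, f k x • P k) :
    Algebra.adjoin K (Set.range Ψ) = Algebra.adjoin K (Set.range P) := by
  apply le_antisymm <;> rw [Algebra.adjoin_le_iff]
  · rintro _ ⟨x, rfl⟩
    rw [hΨ x]
    exact Subalgebra.sum_mem _ fun k _ =>
      Subalgebra.smul_mem _ (Algebra.subset_adjoin (Set.mem_range_self k)) _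
  · rintro _ ⟨k, rfl⟩
    exact Algebra.span_le_adjoin K _ (mem_span_range_of_linearIndependent hf P Ψ hΨ k)

@[simps]
def Matrix.dotProductMulVecLinear {m n R : Type*} [Fintype m] [Fintype n] [CommSemiring R]
    (u : m → R) (v : n → R) : Matrix m n R →ₗ[R] R where
  toFun M := u ⬝ᵥ (M *ᵥ v)
  map_add' M M' := by rw [add_mulVec, dotProduct_add]
  map_smul' c M := by rw [smul_mulVec, dotProduct_smul, RingHom.id_apply]

theorem LinearMap.forall_eq_iff_of_span_eq {R M M₂ : Type*} [Semiring R] [AddCommMonoid M]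
    [Module R M] [AddCommMonoid M₂] [Module R M₂] {s t : Set M} (hst : Submodule.span R s = Submodule.span R t)
    (φ ψ : M →ₗ[R] M₂) : (∀ x ∈ s, φ x = ψ x) ↔ ∀ y ∈ t, φ y = ψ y := by
  change Set.EqOn φ ψ s ↔ Set.EqOn φ ψ t
  rw [← LinearMap.eqOn_span_iff, hst, LinearMap.eqOn_span_iff]

theorem stmt13_general {α : Type*} {d N : ℕ}
    (f : Fin d → α → ℝ) (hf : LinearIndependent ℝ f)
    (P : Fin d → Matrix (Fin N) (Fin N) ℝ)
    (Ψ : α → Matrix (Fin N) (Fin N) ℝ)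
    (hΨ : ∀ x, Ψ x = ∑ k, f k x • P k) :
    (Submodule.span ℝ {M : Matrix (Fin N) (Fin N) ℝ | ∃ w : List α, M = (w.map Ψ).prod}
      = Submodule.span ℝ
          {M : Matrix (Fin N) (Fin N) ℝ | ∃ ks : List (Fin d), M = (ks.map P).prod}) ∧
    ∀ π₁ π₂ : Fin N → ℝ,
      ((∀ w : List α, π₁ ⬝ᵥ ((w.map Ψ).prod *ᵥ 1) = π₂ ⬝ᵥ ((w.map Ψ).prod *ᵥ 1)) ↔
       (∀ ks : List (Fin d), π₁ ⬝ᵥ ((ks.map P).prod *ᵥ 1) = π₂ ⬝ᵥ ((ks.map P).prod *ᵥ 1))) := by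
  have hspan : Submodule.span ℝ {M | ∃ w : List α, M = (w.map Ψ).prod} =
      Submodule.span ℝ {M | ∃ ks : List (Fin d), M = (ks.map P).prod} := by
    rw [span_setOf_list_prod_eq_adjoin, span_setOf_list_prod_eq_adjoin,
      adjoin_range_eq_of_linearIndependent hf P Ψ hΨ]
  refine ⟨hspan, fun π₁ π₂ => ?_⟩
  have := LinearMap.forall_eq_iff_of_span_eq hspan (dotProductMulVecLinear π₁ 1)
    (dotProductMulVecLinear π₂ 1)
  simpa only [Set.mem_ofPred_eq, forall_exists_index, forall_eq_apply_imp_iff,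
    dotProductMulVecLinear_apply] using this

theorem stmt13 {α : Type*} {d N : ℕ} (hd : 0 < d) (hN : 0 < N)
    (f : Fin d → α → ℝ) (hf : LinearIndependent ℝ f)
    (P : Fin d → Matrix (Fin N) (Fin N) ℝ)
    (Ψ : α → Matrix (Fin N) (Fin N) ℝ)
    (hΨ : ∀ x, Ψ x = ∑ k, f k x • P k) :
    (Submodule.span ℝ {M : Matrix (Fin N) (Fin N) ℝ | ∃ w : List α, M = (w.map Ψ).prod}
      = Submodule.span ℝ
          {M : Matrix (Fin N) (Fin N) ℝ | ∃ ks : List (Fin d), M = (ks.map P).prod}) ∧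
    ∀ π₁ π₂ : Fin N → ℝ,
      ((∀ w : List α, π₁ ⬝ᵥ ((w.map Ψ).prod *ᵥ 1) = π₂ ⬝ᵥ ((w.map Ψ).prod *ᵥ 1)) ↔
       (∀ ks : List (Fin d), π₁ ⬝ᵥ ((ks.map P).prod *ᵥ 1) = π₂ ⬝ᵥ ((ks.map P).prod *ᵥ 1))) :=
  stmt13_general f hf P Ψ hΨ
end

section
/- Let Σ be a metric space equipped with a Borel measure λ that assigns positive measure to every nonempty open set. Let Ψ : Σ → [0,∞)^{N×N} be piecewise continuous with all entries integrable, and suppose Ψ admits an independent functional decomposition Ψ(x) = Σ_{k=1}^d f_k(x)·P_k where f₁, …, f_d : Σ → ℝ are linearly independent functions and P₁, …, P_d ∈ ℝ^{N×N}. If for some indices i, j the entry ∫_Σ Ψ_{i,j} dλ = 0, then (P_k)_{i,j} = 0 for every k = 1, …, d. -/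
open MeasureTheory Filter

/-- A function between topological spaces is piecewise continuous with set of
continuity `C` if `C` is open, `f` is continuous on `C`, and every point outside
`C` is the limit of a sequence of points of `C` along which the values of `f`
converge to the value of `f` at that point. -/
def PiecewiseContinuous {X E : Type*} [TopologicalSpace X] [TopologicalSpace E]
    (f : X → E) (C : Set X) : Prop :=
  IsOpen C ∧ ContinuousOn f C ∧
    ∀ x ∉ C, ∃ u : ℕ → X, (∀ n, u n ∈ C) ∧
      Tendsto u atTop (nhds x) ∧ Tendsto (fun n => f (u n)) atTop (nhds (f x))

theorem stmt15 {X : Type*} [MetricSpace X] [MeasurableSpace X] [BorelSpace X]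
    (lam : Measure X)
    (hpos : ∀ U : Set X, IsOpen U → U.Nonempty → 0 < lam U)
    {N d : ℕ}
    (Ψ : X → Matrix (Fin N) (Fin N) ℝ)
    (hnn : ∀ x i j, 0 ≤ Ψ x i j)
    (hpc : ∃ C, PiecewiseContinuous Ψ C)
    (hint : ∀ i j, Integrable (fun x => Ψ x i j) lam)
    (f : Fin d → X → ℝ) (hf : LinearIndependent ℝ f)
    (P : Fin d → Matrix (Fin N) (Fin N) ℝ)
    (hdec : ∀ x, Ψ x = ∑ k, f k x • P k)
    (i j : Fin N) (hzero : ∫ x, Ψ x i j ∂lam = 0) :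
    ∀ k, P k i j = 0 := by
  obtain ⟨C, hCopen, hCcont, hCseq⟩ := hpc
  set g : X → ℝ := fun x => Ψ x i j with hg
  have hcontEval : Continuous fun M : Matrix (Fin N) (Fin N) ℝ => M i j :=
    (continuous_apply j).comp (continuous_apply i)
  have hgae : ∀ᵐ x ∂lam, g x = 0 :=
    (integral_eq_zero_iff_of_nonneg (fun x => hnn x i j) (hint i j)).mp hzero
  have hnull : lam {x | g x ≠ 0} = 0 := ae_iff.mp hgae
  have hC0 : ∀ x ∈ C, g x = 0 := by
    intro x hx
    by_contra hne
    have hgc : ContinuousAt g x := by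
      have : ContinuousOn g C := hcontEval.comp_continuousOn hCcont
      exact this.continuousAt (hCopen.mem_nhds hx)
    have hev : ∀ᶠ y in nhds x, g y ≠ 0 := hgc.eventually_ne hne
    obtain ⟨U, hUsub, hUopen, hxU⟩ := eventually_nhds_iff.mp hev
    have h1 := hpos U hUopen ⟨x, hxU⟩
    have h2 : lam U = 0 := measure_mono_null (fun y hy => hUsub y hy) hnull
    rw [h2] at h1
    exact lt_irrefl _ h1
  have hall : ∀ x, g x = 0 := by
    intro x
    by_cases hx : x ∈ C
    · exact hC0 x hx
    · obtain ⟨u, hu, _, hlim⟩ := hCseq x hx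
      have hten : Tendsto (fun n => g (u n)) atTop (nhds (g x)) :=
        (hcontEval.continuousAt.tendsto.comp hlim)
      have hz : (fun n => g (u n)) = fun _ => (0 : ℝ) := funext fun n => hC0 _ (hu n)
      rw [hz] at hten
      exact tendsto_nhds_unique hten tendsto_const_nhds
  have hsum : (∑ k, (P k i j) • f k) = 0 := by
    funext x
    have := hall x
    simp only [hg, hdec x] at this
    simpa [Matrix.sum_apply, Matrix.smul_apply, smul_eq_mul, mul_comm] using this
  intro k
  exact Fintype.linearIndependent_iff.mp hf _ hsum k
end

section
/- Let Σ be a metric space equipped with a Borel measure λ that assigns positive measure to every nonempty open set. Let Ψ : Σ → [0,∞)^{N×N} be piecewise continuous with independent functional decomposition Ψ(x) = Σ_{k=1}^d f_k(x)·P_k (f₁, …, f_d linearly independent functions, P_k ∈ ℝ^{N×N}), such that each f_k is integrable with ∫_Σ f_k dλ = 1 and the entrywise integral P := ∫_Σ Ψ dλ = Σ_{k=1}^d P_k is a stochastic matrix. Let θ = min( 1/2 , min{ P_{i,j} : P_{i,j} > 0 } / max{ (P_k)_{i,j} : i,j ∈ {1,…,N}, k ∈ {1,…,d} } ). Then θ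 > 0, and for every k = 1, …, d the matrix P − θ·P_k is entrywise nonnegative; moreover Σ_{k=1}^d (1/(d−θ))·(P − θ·P_k) = P. -/
open MeasureTheory Filter

/-- A real square matrix is (row-)stochastic if all entries are nonnegative
and every row sums to `1`. -/
def IsStochastic {N : ℕ} (M : Matrix (Fin N) (Fin N) ℝ) : Prop :=
  (∀ i j, 0 ≤ M i j) ∧ ∀ i, ∑ j, M i j = 1

theorem stmt16 {X : Type*} [MetricSpace X] [MeasurableSpace X] [BorelSpace X]
    (lam : Measure X)
    (hpos : ∀ U : Set X, IsOpen U → U.Nonempty → 0 < lam U)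
    {N d : ℕ} (hN : 0 < N) (hd : 0 < d)
    (Ψ : X → Matrix (Fin N) (Fin N) ℝ)
    (hnn : ∀ x i j, 0 ≤ Ψ x i j)
    (hpc : ∃ C, PiecewiseContinuous Ψ C)
    (hint : ∀ i j, Integrable (fun x => Ψ x i j) lam)
    (f : Fin d → X → ℝ) (hf : LinearIndependent ℝ f)
    (P : Fin d → Matrix (Fin N) (Fin N) ℝ)
    (hdec : ∀ x, Ψ x = ∑ k, f k x • P k)
    (hfint : ∀ k, Integrable (f k) lam)
    (hfone : ∀ k, ∫ x, f k x ∂lam = 1)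
    (hPint : (Matrix.of fun i j => ∫ x, Ψ x i j ∂lam) = ∑ k, P k)
    (hstoch : IsStochastic (∑ k, P k))
    (θ : ℝ)
    (hθ : θ = min (1 / 2)
        (sInf {y : ℝ | 0 < y ∧ ∃ i j, (∑ k, P k) i j = y} /
          sSup {y : ℝ | ∃ k i j, P k i j = y})) :
    0 < θ ∧
    (∀ k i j, 0 ≤ ((∑ k', P k') - θ • P k) i j) ∧
    (∑ k, (1 / ((d : ℝ) - θ)) • ((∑ k', P k') - θ • P k)) = ∑ k', P k' := by
  classical
  set Pm : Matrix (Fin N) (Fin N) ℝ := ∑ k, P k with hPm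
  have hPmapp : ∀ i j, Pm i j = ∑ k, P k i j := by
    intro i j; simp [hPm, Matrix.sum_apply]
  set S : Set ℝ := {y : ℝ | 0 < y ∧ ∃ i j, Pm i j = y} with hS
  set T : Set ℝ := {y : ℝ | ∃ k i j, P k i j = y} with hT
  -- finiteness
  have hSfin : S.Finite := by
    apply Set.Finite.subset (Set.finite_range (fun p : Fin N × Fin N => Pm p.1 p.2))
    rintro y ⟨-, i, j, rfl⟩
    exact ⟨(i, j), rfl⟩
  have hTfin : T.Finite := by
    apply Set.Finite.subset
      (Set.finite_range (fun p : Fin d × Fin N × Fin N => P p.1 p.2.1 p.2.2))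
    rintro y ⟨k, i, j, rfl⟩
    exact ⟨(k, i, j), rfl⟩
  -- S is nonempty
  have hSne : S.Nonempty := by
    have i0 : Fin N := ⟨0, hN⟩
    have hrow : ∑ j, Pm i0 j = 1 := hstoch.2 i0
    have hj : ∃ j, 0 < Pm i0 j := by
      by_contra hc
      push_neg at hc
      have : ∑ j, Pm i0 j ≤ 0 := Finset.sum_nonpos fun j _ => hc j
      linarith
    obtain ⟨j, hj⟩ := hj
    exact ⟨Pm i0 j, hj, i0, j, rfl⟩
  -- some entry of some P k is positive
  have hTpos : ∃ y ∈ T, 0 < y := by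
    by_contra h
    push_neg at h
    have hall : ∀ k i j, P k i j ≤ 0 := fun k i j => h (P k i j) ⟨k, i, j, rfl⟩
    have htot : ∑ i, ∑ j, Pm i j = (N : ℝ) := by
      simp [hstoch.2]
    have htot' : ∑ i, ∑ j, Pm i j ≤ 0 := by
      apply Finset.sum_nonpos; intro i _
      apply Finset.sum_nonpos; intro j _
      rw [hPmapp]
      exact Finset.sum_nonpos fun k _ => hall k i j
    have : (0 : ℝ) < N := by exact_mod_cast hN
    linarith
  obtain ⟨y0, hy0T, hy0⟩ := hTpos
  have hsSup : 0 < sSup T := lt_of_lt_of_le hy0 (le_csSup hTfin.bddAbove hy0T)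
  have hsInf : 0 < sInf S := (hSne.csInf_mem hSfin).1
  have hθpos : 0 < θ := by
    rw [hθ]
    exact lt_min (by norm_num) (div_pos hsInf hsSup)
  have hθhalf : θ ≤ 1 / 2 := hθ ▸ min_le_left _ _
  have hθdiv : θ ≤ sInf S / sSup T := hθ ▸ min_le_right _ _
  -- key: if Pm i j = 0 then every P k i j = 0
  have hkey : ∀ i j, Pm i j = 0 → ∀ k, P k i j = 0 := by
    intro i j hij
    -- the (i,j) entry of Ψ vanishes identically
    have hI : ∫ x, Ψ x i j ∂lam = 0 := by
      have : (Matrix.of fun i j => ∫ x, Ψ x i j ∂lam) i j = Pm i j := by rw [hPint]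
      simpa [hij] using this
    have hae : (fun x => Ψ x i j) =ᵐ[lam] 0 :=
      (integral_eq_zero_iff_of_nonneg (fun x => hnn x i j)
        (hint i j)).mp hI
    obtain ⟨C, hCopen, hCcont, hCseq⟩ := hpc
    have heval : Continuous fun M : Matrix (Fin N) (Fin N) ℝ => M i j :=
      (continuous_apply j).comp (continuous_apply i)
    have hcont : ContinuousOn (fun x => Ψ x i j) C := heval.comp_continuousOn hCcont
    have hzeroC : ∀ x ∈ C, Ψ x i j = 0 := by
      by_contra h
      push_neg at h
      obtain ⟨x0, hx0C, hx0⟩ := h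
      have hU : IsOpen (C ∩ (fun x => Ψ x i j) ⁻¹' ({0}ᶜ)) :=
        hcont.isOpen_inter_preimage hCopen isOpen_compl_singleton
      have hUne : (C ∩ (fun x => Ψ x i j) ⁻¹' ({0}ᶜ)).Nonempty :=
        ⟨x0, hx0C, by simpa using hx0⟩
      have hnull : lam {x | Ψ x i j ≠ 0} = 0 := by
        simpa [Filter.EventuallyEq, ae_iff] using hae
      have : lam (C ∩ (fun x => Ψ x i j) ⁻¹' ({0}ᶜ)) = 0 := by
        apply measure_mono_null _ hnull
        rintro x ⟨-, hx⟩
        simpa using hx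
      exact absurd this (ne_of_gt (hpos _ hU hUne))
    have hzero : ∀ x, Ψ x i j = 0 := by
      intro x
      by_cases hx : x ∈ C
      · exact hzeroC x hx
      · obtain ⟨u, huC, -, hulim⟩ := hCseq x hx
        have h1 : Tendsto (fun n => Ψ (u n) i j) atTop (nhds (Ψ x i j)) :=
          (heval.tendsto _).comp hulim
        have h2 : Tendsto (fun n => Ψ (u n) i j) atTop (nhds 0) := by
          simpa [hzeroC _ (huC _)] using tendsto_const_nhds
            (α := ℝ) (f := atTop (α := ℕ)) (a := (0 : ℝ))
        exact tendsto_nhds_unique h1 h2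
    -- use linear independence
    have hsum0 : (∑ k, (P k i j) • f k) = 0 := by
      funext x
      have := hzero x
      rw [hdec x] at this
      simp only [Matrix.sum_apply, Matrix.smul_apply, smul_eq_mul] at this
      simpa [mul_comm] using this
    exact Fintype.linearIndependent_iff.mp hf (fun k => P k i j) hsum0
  refine ⟨hθpos, ?_, ?_⟩
  · intro k i j
    simp only [Matrix.sub_apply, Matrix.smul_apply, smul_eq_mul, ← hPm]
    rcases eq_or_lt_of_le (hstoch.1 i j) with h0 | h0
    · rw [hkey i j h0.symm k]
      linarith
    · rcases le_or_gt (P k i j) 0 with hk | hk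
      · nlinarith
      · have h1 : sInf S ≤ Pm i j := csInf_le hSfin.bddBelow ⟨h0, i, j, rfl⟩
        have h2 : P k i j ≤ sSup T := le_csSup hTfin.bddAbove ⟨k, i, j, rfl⟩
        have h3 : θ * P k i j ≤ (sInf S / sSup T) * P k i j :=
          mul_le_mul_of_nonneg_right hθdiv hk.le
        have h4 : (sInf S / sSup T) * P k i j ≤ Pm i j := by
          rw [div_mul_eq_mul_div, div_le_iff₀ hsSup]
          nlinarith
        linarith
  · have hdθ : (d : ℝ) - θ ≠ 0 := by
      have : (1 : ℝ) ≤ d := by exact_mod_cast hd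
      intro h; rw [sub_eq_zero] at h; linarith
    ext i j
    simp only [Matrix.sum_apply, Matrix.smul_apply, Matrix.sub_apply, smul_eq_mul, ← hPm]
    rw [← Finset.mul_sum, Finset.sum_sub_distrib, Finset.sum_const, Finset.card_univ,
      Fintype.card_fin, ← Finset.mul_sum, ← hPmapp, nsmul_eq_mul]
    field_simp
end
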